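/- If a_{n₀} ≠ 0 for some index n₀, then there exists δ > 0 such that the set {t ∈ ℝ : |f(t)| ≥ δ} is unbounded above; in particular limsup_{t→∞} |f(t)| ≥ δ > 0, so there is a sequence t_m → ∞ with |f(t_m)| ≥ δ for all m. -/

import Mathlib

/-!
Fix `n₀` and cut the series into a trigonometric polynomial `g` (finitely many terms) and a tail
of sup-norm at most `‖a n₀‖ / 4`. Multiplying `g` by `e^{-iγ_{n₀}t}` and integrating over
`[T, T + L]` gives `L a_{n₀}` up to an error bounded independently of `T` and `L`, because the
frequencies are distinct. For `L` large the mean of `|g|` over `[T, T + L]` therefore exceeds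
`‖a n₀‖ / 2`, so `|g(t)| > ‖a n₀‖ / 2` and hence `|f(t)| ≥ ‖a n₀‖ / 4` for some `t ≥ T`.
-/

open Filter Finset Complex intervalIntegral

lemma norm_exp_I_mul_ofReal_mul_ofReal (x t : ℝ) : ‖exp (I * x * t)‖ = 1 := by
  rw [show I * x * t = ((x * t : ℝ) : ℂ) * I by push_cast; ring, norm_exp_ofReal_mul_I]

lemma norm_integral_exp_I_mul_le {ω : ℝ} (hω : ω ≠ 0) (u v : ℝ) :
    ‖∫ t in u..v, exp (I * ω * t)‖ ≤ 2 / |ω| := by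
  have hc : I * (ω : ℂ) ≠ 0 := mul_ne_zero I_ne_zero (ofReal_ne_zero.2 hω)
  rw [integral_exp_mul_complex hc, norm_div, norm_mul, norm_I, one_mul, norm_real,
    Real.norm_eq_abs]
  gcongr
  calc _ ≤ ‖exp (I * ω * v)‖ + ‖exp (I * ω * u)‖ := norm_sub_le _ _
    _ = 2 := by rw [norm_exp_I_mul_ofReal_mul_ofReal, norm_exp_I_mul_ofReal_mul_ofReal]; norm_num

lemma norm_integral_trigPoly_sub_le {ι : Type*} [DecidableEq ι] (s : Finset ι) (a : ι → ℂ)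
    {γ : ι → ℝ} (hγ : Set.InjOn γ s) {i : ι} (hi : i ∈ s) (u v : ℝ) :
    ‖(∫ t in u..v, exp (-(I * γ i * t)) * ∑ n ∈ s, a n * exp (I * γ n * t))
        - ((v - u : ℝ) : ℂ) * a i‖ ≤ ∑ n ∈ s.erase i, 2 * ‖a n‖ / |γ n - γ i| := by
  have hshift : ∀ n (t : ℝ), exp (-(I * γ i * t)) * (a n * exp (I * γ n * t)) =
      a n * exp (I * ↑(γ n - γ i) * t) := by
    intro n t
    rw [mul_left_comm, ← exp_add]
    push_cast
    ring_nf
  have hint : ∀ n ∈ s, IntervalIntegrable (fun t : ℝ => a n * exp (I * ↑(γ n - γ i) * t))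
      MeasureTheory.volume u v :=
    fun n _ => (by fun_prop : Continuous _).intervalIntegrable _ _
  simp_rw [mul_sum, hshift]
  rw [integral_finsetSum hint, ← add_sum_erase s _ hi]
  simp only [integral_const_mul, sub_self, ofReal_zero, mul_zero, zero_mul, exp_zero,
    mul_one, integral_const, real_smul]
  rw [add_sub_cancel_left]
  refine (norm_sum_le _ _).trans (sum_le_sum fun n hn => ?_)
  have hne : γ n - γ i ≠ 0 :=
    sub_ne_zero.2 fun h => (ne_of_mem_erase hn) (hγ (mem_of_mem_erase hn) hi h)
  calc ‖a n * ∫ t in u..v, exp (I * ↑(γ n - γ i) * t)‖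
      ≤ ‖a n‖ * (2 / |γ n - γ i|) := by
        rw [norm_mul]; gcongr; exact norm_integral_exp_I_mul_le hne u v
    _ = 2 * ‖a n‖ / |γ n - γ i| := by ring

lemma frequently_norm_trigPoly_gt {ι : Type*} [DecidableEq ι] (s : Finset ι) (a : ι → ℂ)
    {γ : ι → ℝ} (hγ : Set.InjOn γ s) {i : ι} (hi : i ∈ s) {ε : ℝ} (hε : 0 < ε) :
    ∃ᶠ t : ℝ in atTop, ‖a i‖ - ε < ‖∑ n ∈ s, a n * exp (I * γ n * t)‖ := by
  rw [frequently_atTop]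
  intro T
  by_contra! hsmall
  set C := ∑ n ∈ s.erase i, 2 * ‖a n‖ / |γ n - γ i|
  have hC : 0 ≤ C := sum_nonneg fun n _ => by positivity
  set L := C / ε + 1
  have hL : 0 < L := by positivity
  have hCL : C < ε * L := by
    rw [mul_add, mul_div_cancel₀ _ hε.ne']
    linarith
  set F := fun t : ℝ => exp (-(I * γ i * t)) * ∑ n ∈ s, a n * exp (I * γ n * t)
  have hupper : ‖∫ t in T..T + L, F t‖ ≤ (‖a i‖ - ε) * L := by
    have hF : ∀ t ∈ Set.uIoc T (T + L), ‖F t‖ ≤ ‖a i‖ - ε := fun t ht => by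
      rw [Set.uIoc_of_le (by linarith)] at ht
      have hphase : ‖exp (-(I * γ i * t))‖ = 1 := by
        rw [show -(I * γ i * t) = I * ↑(-γ i) * t by push_cast; ring,
          norm_exp_I_mul_ofReal_mul_ofReal]
      simpa only [F, norm_mul, hphase, one_mul] using hsmall t ht.1.le
    simpa only [add_sub_cancel_left, abs_of_pos hL] using norm_integral_le_of_norm_le_const hF
  have hmean := norm_integral_trigPoly_sub_le s a hγ hi T (T + L)
  rw [add_sub_cancel_left] at hmean
  have hlower : ‖a i‖ * L - C ≤ ‖∫ t in T..T + L, F t‖ := by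
    have hnorm : ‖(L : ℂ) * a i‖ = ‖a i‖ * L := by
      rw [norm_mul, norm_real, Real.norm_of_nonneg hL.le, mul_comm]
    linarith [norm_le_norm_add_norm_sub (∫ t in T..T + L, F t) ((L : ℂ) * a i)]
  linarith

lemma norm_tsum_sub_sum_range_le {R : Type*} [NormedRing R] [CompleteSpace R] {a e : ℕ → R}
    (ha : Summable fun n => ‖a n‖) (he : ∀ n, ‖e n‖ ≤ 1) (N : ℕ) :
    ‖∑' n, a n * e n - ∑ n ∈ range N, a n * e n‖ ≤ ∑' k, ‖a (k + N)‖ := by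
  have hbound : ∀ n, ‖a n * e n‖ ≤ ‖a n‖ := fun n =>
    (norm_mul_le _ _).trans (mul_le_of_le_one_right (norm_nonneg _) (he n))
  have hsum : Summable fun n => a n * e n := .of_norm_bounded ha hbound
  rw [← hsum.sum_add_tsum_nat_add N, add_sub_cancel_left]
  exact tsum_of_norm_bounded ((summable_nat_add_iff N).2 ha).hasSum fun k => hbound (k + N)

lemma frequently_norm_trigSeries_ge {a : ℕ → ℂ} (ha : Summable fun n => ‖a n‖) {γ : ℕ → ℝ}
    (hγ : Function.Injective γ) {n₀ : ℕ} (h : a n₀ ≠ 0) :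
    ∃ᶠ t : ℝ in atTop, ‖a n₀‖ / 4 ≤ ‖∑' n, a n * exp (I * γ n * t)‖ := by
  have hA : 0 < ‖a n₀‖ := norm_pos_iff.2 h
  obtain ⟨N, htail, hN⟩ : ∃ N, ∑' k, ‖a (k + N)‖ ≤ ‖a n₀‖ / 4 ∧ n₀ < N :=
    (((tendsto_sum_nat_add fun n => ‖a n‖).eventually (ge_mem_nhds (by positivity))).and
      (eventually_gt_atTop n₀)).exists
  refine (frequently_norm_trigPoly_gt (range N) a hγ.injOn (mem_range.2 hN)
    (half_pos hA)).mono fun t ht => ?_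
  have happrox := norm_tsum_sub_sum_range_le ha
    (fun n => (norm_exp_I_mul_ofReal_mul_ofReal (γ n) t).le) N
  linarith [norm_le_norm_add_norm_sub (∑' n, a n * exp (I * γ n * t))
    (∑ n ∈ range N, a n * exp (I * γ n * t))]

/-- If some coefficient `a_{n₀}` of the absolutely convergent
trigonometric series `f(t) = ∑ aₙ e^{iγₙt}` is nonzero, then there is `δ > 0` such that
`{t : |f(t)| ≥ δ}` is unbounded above; in particular there is a sequence `tₘ → ∞` with
`|f(tₘ)| ≥ δ` for all `m`. -/
theorem trig_series_nonzero_coeff_recurrence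
    (a : ℕ → ℂ) (ha : Summable fun n => ‖a n‖)
    (γ : ℕ → ℝ) (hγ : Function.Injective γ)
    (f : ℝ → ℂ)
    (hf : ∀ t : ℝ, f t = ∑' n : ℕ, a n * Complex.exp (Complex.I * (γ n : ℂ) * (t : ℂ)))
    (n₀ : ℕ) (h : a n₀ ≠ 0) :
    ∃ δ : ℝ, 0 < δ ∧ (∀ T : ℝ, ∃ t : ℝ, T ≤ t ∧ δ ≤ ‖f t‖) ∧
      ∃ u : ℕ → ℝ, Filter.Tendsto u Filter.atTop Filter.atTop ∧ ∀ m : ℕ, δ ≤ ‖f (u m)‖ := by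
  have hfreq : ∃ᶠ t in atTop, ‖a n₀‖ / 4 ≤ ‖f t‖ := by
    simpa only [hf] using frequently_norm_trigSeries_ge ha hγ h
  exact ⟨‖a n₀‖ / 4, by positivity, frequently_atTop.1 hfreq, frequently_iff_seq_forall.1 hfreq⟩
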